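/- Jacobian of the congruence transformation on symmetric matrices: for an invertible n × n real matrix A, the linear map T ↦ Aᵀ T A on the real vector space of n × n symmetric matrices has determinant (det A)^{n+1}; in particular its absolute value is |det A|^{n+1}. -/

import Mathlib

/-!
Since `(AB)ᵀ T (AB) = Bᵀ (Aᵀ T A) B`, both sides are multiplicative in `A`, and every matrix is a
product of diagonal matrices and transvections. In the coordinates `T i j` (`i ≤ j`) of a symmetric
matrix, `diag d` acts diagonally with eigenvalues `d i * d j`, and each `d k` occurs in exactly
`n + 1` of them. For transvections, `φ c = det (T ↦ E(c)ᵀ T E(c))` turns addition into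
multiplication and is even (conjugate `E(c)` by a sign matrix to get `E(-c)`), hence
`φ c = φ (c/2) φ (-c/2) = φ 0 = 1`.
-/

open Finset Matrix

theorem card_filter_le_add_card_filter_ge {ι : Type*} [Fintype ι] [LinearOrder ι] (i : ι) :
    #{j | i ≤ j} + #{j | j ≤ i} = Fintype.card ι + 1 := by
  rw [← card_union_add_card_inter]
  have hunion : (({j | i ≤ j} : Finset ι) ∪ ({j | j ≤ i} : Finset ι)) = univ := by
    ext j; simp [le_total]
  have hinter : (({j | i ≤ j} : Finset ι) ∩ ({j | j ≤ i} : Finset ι)) = {i} := by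
    ext j; simp [le_antisymm_iff, and_comm]
  rw [hunion, hinter, card_univ, card_singleton]

theorem prod_subtype_le_mul_eq_pow {ι M : Type*} [Fintype ι] [LinearOrder ι] [CommMonoid M]
    (d : ι → M) :
    ∏ p : {p : ι × ι // p.1 ≤ p.2}, d p.1.1 * d p.1.2 = (∏ i, d i) ^ (Fintype.card ι + 1) := by
  have hsplit : ∀ i j : ι, (if i ≤ j then d i * d j else 1) =
      (if i ≤ j then d i else 1) * (if i ≤ j then d j else 1) := by
    intro i j; split_ifs <;> simp
  calc ∏ p : {p : ι × ι // p.1 ≤ p.2}, d p.1.1 * d p.1.2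
      = ∏ i, ∏ j, if i ≤ j then d i * d j else 1 := by
        rw [← prod_subtype {p : ι × ι | p.1 ≤ p.2} (by simp) fun p => d p.1 * d p.2,
          prod_filter, Fintype.prod_prod_type]
    _ = (∏ i, ∏ j, if i ≤ j then d i else 1) * ∏ j, ∏ i, if i ≤ j then d j else 1 := by
        simp only [hsplit, prod_mul_distrib]
        rw [prod_comm (f := fun i j => if i ≤ j then d j else 1)]
    _ = ∏ i, d i ^ (#{j | i ≤ j} + #{j | j ≤ i}) := by
        simp only [← prod_filter, prod_const, pow_add, prod_mul_distrib]
    _ = (∏ i, d i) ^ (Fintype.card ι + 1) := by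
        simp only [card_filter_le_add_card_filter_ge, prod_pow]

namespace Matrix

section CommRing

variable {ι K : Type*} [CommRing K] [StarRing K] [TrivialStar K]

theorem mem_selfAdjoint_iff_transpose_eq {T : Matrix ι ι K} :
    T ∈ selfAdjoint (Matrix ι ι K) ↔ Tᵀ = T := by
  rw [selfAdjoint.mem_iff, star_eq_conjTranspose, conjTranspose_eq_transpose_of_trivial]

variable [Fintype ι]

def congruence (A : Matrix ι ι K) :
    selfAdjoint (Matrix ι ι K) →ₗ[K] selfAdjoint (Matrix ι ι K) where
  toFun T := ⟨Aᵀ * T * A, mem_selfAdjoint_iff_transpose_eq.2 <| by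
    rw [transpose_mul, transpose_mul, transpose_transpose,
      mem_selfAdjoint_iff_transpose_eq.1 T.2, Matrix.mul_assoc]⟩
  map_add' T S := Subtype.ext <| by simp [Matrix.mul_add, Matrix.add_mul]
  map_smul' c T := Subtype.ext <| by simp

@[simp]
theorem coe_congruence_apply (A : Matrix ι ι K) (T : selfAdjoint (Matrix ι ι K)) :
    (congruence A T : Matrix ι ι K) = Aᵀ * T * A :=
  rfl

theorem congruence_one [DecidableEq ι] : congruence (1 : Matrix ι ι K) = LinearMap.id := by
  ext T : 2
  simp

theorem congruence_mul (A B : Matrix ι ι K) :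
    congruence (A * B) = congruence B ∘ₗ congruence A := by
  ext T : 2
  simp [transpose_mul, Matrix.mul_assoc]

theorem det_congruence_mul (A B : Matrix ι ι K) :
    (congruence (A * B)).det = (congruence A).det * (congruence B).det := by
  rw [congruence_mul, LinearMap.det_comp, mul_comm]

theorem det_congruence_conj_of_mul_self_eq_one [DecidableEq ι] {D : Matrix ι ι K}
    (hD : D * D = 1) (M : Matrix ι ι K) :
    (congruence (D * M * D)).det = (congruence M).det := by
  have hsq : (congruence D).det * (congruence D).det = 1 := by
    rw [← det_congruence_mul, hD, congruence_one, LinearMap.det_id]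
  rw [det_congruence_mul, det_congruence_mul]
  linear_combination (congruence M).det * hsq

variable [LinearOrder ι]

@[simps]
def selfAdjointEquivUpper :
    selfAdjoint (Matrix ι ι K) ≃ₗ[K] ({p : ι × ι // p.1 ≤ p.2} → K) where
  toFun T p := (T : Matrix ι ι K) p.1.1 p.1.2
  invFun g := ⟨of fun i j => g ⟨(min i j, max i j), min_le_max⟩,
    mem_selfAdjoint_iff_transpose_eq.2 <| by ext i j; simp [min_comm, max_comm]⟩
  map_add' _ _ := rfl
  map_smul' _ _ := rfl
  left_inv T := by
    ext i j
    rcases le_total i j with h | h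
    · simp [h]
    · have hT := congrFun₂ (mem_selfAdjoint_iff_transpose_eq.1 T.2) i j
      simpa [h] using hT
  right_inv g := by
    ext p
    simp [p.2]

theorem congruence_diagonal_conj (d : ι → K) :
    selfAdjointEquivUpper.conj (congruence (diagonal d)) =
      toLin' (diagonal fun p : {p : ι × ι // p.1 ≤ p.2} => d p.1.1 * d p.1.2) := by
  refine LinearMap.ext fun g => funext fun p => ?_
  simp [LinearEquiv.conj_apply, mulVec_diagonal, diagonal_mul, mul_diagonal, p.2]
  ring

theorem det_congruence_diagonal (d : ι → K) :
    (congruence (diagonal d)).det = (diagonal d).det ^ (Fintype.card ι + 1) := by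
  rw [← LinearMap.det_conj _ selfAdjointEquivUpper, ← LinearMap.comp_assoc,
    ← LinearEquiv.conj_apply, congruence_diagonal_conj, LinearMap.det_toLin', det_diagonal,
    det_diagonal, prod_subtype_le_mul_eq_pow]

end CommRing

theorem diagonal_update_neg_one_mul_transvection_mul {ι K : Type*} [Fintype ι] [DecidableEq ι]
    [CommRing K] {i j : ι} (hij : i ≠ j) (c : K) :
    diagonal (Function.update 1 i (-1)) * transvection i j c * diagonal (Function.update 1 i (-1)) =
      transvection i j (-c) := by
  ext a b
  simp only [diagonal_mul, mul_diagonal, transvection, add_apply, one_apply, single_apply,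
    Function.update_apply, Pi.one_apply]
  by_cases hai : a = i <;> by_cases hbi : b = i <;> by_cases hab : a = b <;>
    simp_all [eq_comm]

section Field

variable {ι K : Type*} [Fintype ι] [Field K] [StarRing K] [TrivialStar K]

theorem det_congruence_transvection [DecidableEq ι] [NeZero (2 : K)] {i j : ι} (hij : i ≠ j)
    (c : K) : (congruence (transvection i j c)).det = 1 := by
  set φ : K → K := fun c => (congruence (transvection i j c)).det
  have hadd (a b : K) : φ (a + b) = φ a * φ b := by
    simp only [φ, ← transvection_mul_transvection_same _ _ hij, det_congruence_mul]
  have hzero : φ 0 = 1 := by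
    simp only [φ, transvection_zero, congruence_one, LinearMap.det_id]
  have hneg (a : K) : φ (-a) = φ a := by
    have hsign : diagonal (Function.update (1 : ι → K) i (-1)) *
        diagonal (Function.update 1 i (-1)) = 1 := by
      rw [diagonal_mul_diagonal, ← diagonal_one]
      congr 1
      ext k
      by_cases hk : k = i <;> simp [hk]
    simp only [φ, ← diagonal_update_neg_one_mul_transvection_mul hij,
      det_congruence_conj_of_mul_self_eq_one hsign]
  calc φ c = φ (c / 2) * φ (c / 2) := by rw [← hadd, add_halves]
    _ = φ (-(c / 2)) * φ (c / 2) := by rw [hneg]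
    _ = 1 := by rw [← hadd, neg_add_cancel, hzero]

theorem det_congruence [LinearOrder ι] [NeZero (2 : K)] (A : Matrix ι ι K) :
    (congruence A).det = A.det ^ (Fintype.card ι + 1) := by
  induction A using diagonal_transvection_induction with
  | hdiag D _ => exact det_congruence_diagonal D
  | htransvec t =>
    rw [t.det, one_pow, TransvectionStruct.toMatrix, det_congruence_transvection t.hij]
  | hmul A B hA hB => rw [det_congruence_mul, hA, hB, det_mul, mul_pow]

end Field

end Matrix

theorem det_congruence_symm_general (n : ℕ) (A : Matrix (Fin n) (Fin n) ℝ)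
    (f : (selfAdjoint (Matrix (Fin n) (Fin n) ℝ)) →ₗ[ℝ]
         (selfAdjoint (Matrix (Fin n) (Fin n) ℝ)))
    (hf : ∀ T, (f T : Matrix (Fin n) (Fin n) ℝ) = Aᵀ * (T : Matrix (Fin n) (Fin n) ℝ) * A) :
    LinearMap.det f = A.det ^ (n + 1) := by
  have hf_eq : f = congruence A := LinearMap.ext fun T => Subtype.ext (hf T)
  rw [hf_eq, det_congruence, Fintype.card_fin]

theorem det_congruence_symm (n : ℕ) (A : Matrix (Fin n) (Fin n) ℝ) (hA : A.det ≠ 0)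
    (f : (selfAdjoint (Matrix (Fin n) (Fin n) ℝ)) →ₗ[ℝ]
         (selfAdjoint (Matrix (Fin n) (Fin n) ℝ)))
    (hf : ∀ T, (f T : Matrix (Fin n) (Fin n) ℝ) = Aᵀ * (T : Matrix (Fin n) (Fin n) ℝ) * A) :
    LinearMap.det f = A.det ^ (n + 1) :=
  det_congruence_symm_general n A f hf
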